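/- arXiv:1803.06279 — 2 statements merged into one kernel-verified Lean document; each statement's English description precedes it below -/
import Mathlib

section
/- Let d, m ≥ 1, let B̄ ∈ M_d(ℂ) be a ladder matrix (all subdiagonal entries b_1,…,b_{d−1} nonzero, all other entries zero), and let X = Σ_{i,j=1}^{d} E_{i,j} ⊗ λ_{i,j}·1_m ∈ M_{dm}(ℂ) be a matrix all of whose m×m blocks are scalar. If X commutes with both B̄ ⊗ 1_m and B̄† ⊗ 1_m, then the matrix Λ = (λ_{i,j}) ∈ M_d(ℂ) is a scalar multiple of 1_d, and hence X = λ·1_{dm} for some λ ∈ ℂ. (Second step of the induction in the proof of Proposition 2.) -/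
/-!
Since `Λ` commutes with `B̄†`, it preserves `ker B̄† = ℂ e₀`, so `Λ e₀ = c e₀`. Since `B̄ eₖ` is a
nonzero multiple of `eₖ₊₁` and `Λ` commutes with `B̄`, induction gives `Λ eₖ = c eₖ` for every `k`.
Both commutation relations descend from `Λ ⊗ 1ₘ` to `Λ` because `· ⊗ 1ₘ` is multiplicative and,
for `m ≥ 1`, injective.
-/

open Matrix Kronecker

/-- A *ladder matrix* `B̄ ∈ M_d(ℂ)`: all entries vanish except the
subdiagonal ones `B̄_{k+1,k}`, all of which are nonzero. -/
def IsLadder {d : ℕ} (B : Matrix (Fin d) (Fin d) ℂ) : Prop :=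
  (∀ i j : Fin d, (i : ℕ) ≠ (j : ℕ) + 1 → B i j = 0) ∧
  ∀ (j : Fin d) (h : (j : ℕ) + 1 < d), B ⟨(j : ℕ) + 1, h⟩ j ≠ 0

lemma Matrix.kronecker_one_injective {R ι κ : Type*} [MulZeroOneClass R] [DecidableEq ι]
    [Nonempty ι] : Function.Injective (fun A : Matrix κ κ R ↦ A ⊗ₖ (1 : Matrix ι ι R)) := by
  intro A A' h
  obtain ⟨i⟩ := ‹Nonempty ι›
  ext k l
  simpa using congrFun (congrFun h (k, i)) (l, i)

lemma Matrix.commute_of_commute_kronecker_one {R ι κ : Type*} [CommSemiring R] [DecidableEq ι]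
    [Fintype ι] [Fintype κ] [Nonempty ι] {A A' : Matrix κ κ R}
    (h : Commute (A ⊗ₖ (1 : Matrix ι ι R)) (A' ⊗ₖ 1)) : Commute A A' := by
  apply Matrix.kronecker_one_injective (ι := ι)
  simpa only [← mul_kronecker_mul, one_mul] using h.eq

namespace IsLadder

variable {n : ℕ} {B : Matrix (Fin (n + 1)) (Fin (n + 1)) ℂ}

lemma subdiag_ne_zero (hB : IsLadder B) (j : Fin n) : B j.succ j.castSucc ≠ 0 :=
  hB.2 j.castSucc (by simp)

lemma mulVec_single_castSucc (hB : IsLadder B) (j : Fin n) :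
    B *ᵥ Pi.single j.castSucc 1 = B j.succ j.castSucc • Pi.single j.succ 1 := by
  ext i
  rcases eq_or_ne i j.succ with rfl | hi
  · simp
  · simp [hi, hB.1 i j.castSucc (by simpa [Fin.ext_iff] using hi)]

lemma conjTranspose_mulVec_single_zero (hB : IsLadder B) : Bᴴ *ᵥ Pi.single 0 1 = 0 := by
  ext i
  simp [hB.1 0 i (by simp)]

lemma eq_single_zero_of_conjTranspose_mulVec_eq_zero (hB : IsLadder B) {v : Fin (n + 1) → ℂ}
    (hv : Bᴴ *ᵥ v = 0) : v = Pi.single 0 (v 0) := by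
  ext i
  induction i using Fin.cases with
  | zero => simp
  | succ j =>
    have hsum : (Bᴴ *ᵥ v) j.castSucc = star (B j.succ j.castSucc) * v j.succ := by
      simp only [mulVec, dotProduct, conjTranspose_apply]
      refine Finset.sum_eq_single j.succ (fun k _ hk ↦ ?_) (by simp)
      simp [hB.1 k j.castSucc fun h ↦ hk (Fin.ext (by simpa using h))]
    rw [hv, Pi.zero_apply, eq_comm, mul_eq_zero] at hsum
    simpa [hB.subdiag_ne_zero j] using hsum

lemma eq_smul_one_of_commute (hB : IsLadder B) {Λ : Matrix (Fin (n + 1)) (Fin (n + 1)) ℂ}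
    (hΛB : Commute Λ B) (hΛBH : Commute Λ Bᴴ) : Λ = Λ 0 0 • 1 := by
  have hcol : ∀ k, Λ *ᵥ Pi.single k 1 = Λ 0 0 • Pi.single k 1 := by
    intro k
    induction k using Fin.induction with
    | zero =>
      have hker : Bᴴ *ᵥ (Λ *ᵥ Pi.single 0 1) = 0 := by
        rw [mulVec_mulVec, ← hΛBH.eq, ← mulVec_mulVec, hB.conjTranspose_mulVec_single_zero,
          mulVec_zero]
      rw [hB.eq_single_zero_of_conjTranspose_mulVec_eq_zero hker, ← Pi.single_smul', smul_eq_mul,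
        mul_one, mulVec_single_one, col_apply]
    | succ j ih =>
      apply smul_right_injective _ (hB.subdiag_ne_zero j)
      calc B j.succ j.castSucc • Λ *ᵥ Pi.single j.succ 1
          = Λ *ᵥ (B *ᵥ Pi.single j.castSucc 1) := by
            rw [hB.mulVec_single_castSucc, mulVec_smul]
        _ = B *ᵥ (Λ *ᵥ Pi.single j.castSucc 1) := by
            rw [mulVec_mulVec, hΛB.eq, ← mulVec_mulVec]
        _ = B j.succ j.castSucc • Λ 0 0 • Pi.single j.succ 1 := by
            rw [ih, mulVec_smul, hB.mulVec_single_castSucc, smul_comm]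
  exact ext_of_mulVec_single fun k ↦ by rw [hcol, smul_mulVec, one_mulVec]

end IsLadder

/-- Second step of the induction in the proof of Proposition 2: if a matrix
`X = Λ ⊗ 1_m` with scalar `m × m` blocks commutes with `B̄ ⊗ 1_m` and `B̄† ⊗ 1_m`
for a ladder matrix `B̄ ∈ M_d(ℂ)`, then `Λ` is a scalar multiple of `1_d` and hence
`X` is a scalar multiple of `1_{dm}`. -/
theorem scalar_blocks_ladder_commutant {d m : ℕ} (hd : 1 ≤ d) (hm : 1 ≤ m)
    (B : Matrix (Fin d) (Fin d) ℂ) (hB : IsLadder B)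
    (Λ : Matrix (Fin d) (Fin d) ℂ)
    (h1 : (Λ ⊗ₖ (1 : Matrix (Fin m) (Fin m) ℂ)) * (B ⊗ₖ (1 : Matrix (Fin m) (Fin m) ℂ))
        = (B ⊗ₖ (1 : Matrix (Fin m) (Fin m) ℂ)) * (Λ ⊗ₖ (1 : Matrix (Fin m) (Fin m) ℂ)))
    (h2 : (Λ ⊗ₖ (1 : Matrix (Fin m) (Fin m) ℂ)) * (Bᴴ ⊗ₖ (1 : Matrix (Fin m) (Fin m) ℂ))
        = (Bᴴ ⊗ₖ (1 : Matrix (Fin m) (Fin m) ℂ)) * (Λ ⊗ₖ (1 : Matrix (Fin m) (Fin m) ℂ))) :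
    ∃ c : ℂ, Λ = c • (1 : Matrix (Fin d) (Fin d) ℂ) ∧
      Λ ⊗ₖ (1 : Matrix (Fin m) (Fin m) ℂ)
        = c • (1 : Matrix (Fin d × Fin m) (Fin d × Fin m) ℂ) := by
  obtain ⟨n, rfl⟩ : ∃ n, d = n + 1 := ⟨d - 1, by omega⟩
  have : Nonempty (Fin m) := ⟨⟨0, hm⟩⟩
  have hΛ := hB.eq_smul_one_of_commute (commute_of_commute_kronecker_one h1)
    (commute_of_commute_kronecker_one h2)
  refine ⟨Λ 0 0, hΛ, ?_⟩
  nth_rw 1 [hΛ]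
  rw [smul_kronecker, one_kronecker_one]
end

section
/- (Commutant-triviality content of Corollary 2.) Let N ≥ 1 and d_1,…,d_N be positive integers, let H be a Hermitian matrix on ℂ^{d_1} ⊗ ⋯ ⊗ ℂ^{d_N}, and let {B_i}_{i∈I} be a finite family of matrices on the same space. Suppose there are a unitary U and N indices i_1,…,i_N ∈ I such that for each j ∈ {1,…,N}, U·B_{i_j}·U† = B̄^{(N)}_j or U·B_{i_j}·U† = (B̄^{(N)}_j)†, where B̄^{(N)}_j = 1 ⊗ ⋯ ⊗ B̄_j ⊗ ⋯ ⊗ 1 acts as a ladder matrix B̄_j ∈ M_{d_j}(ℂ) (all subdiagonal entries nonzero) on the j-th tensor factor and as the identity on the others. Then every matrix X that commutes with H, with every B_i, and with every B_i† equals λ·1 for some λ ∈ ℂ. -/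
/-!
Conjugating by `U`, it suffices to show that `Y = U X U†` is scalar, knowing that `Y` commutes
with every `B̄⁽ᴺ⁾_j = 1 ⊗ ⋯ ⊗ B̄_j ⊗ ⋯ ⊗ 1` and its adjoint. Freezing all coordinates but the
`j`-th of a row and of a column multi-index cuts out of `Y` a `d_j × d_j` block commuting with
`B̄_j` and `B̄_j†`. Comparing entries of `M B = B M` along the subdiagonal of a ladder matrix `B`
shows that `M` vanishes above the diagonal and has constant diagonal; applied to `M†`, which
commutes with `B` when `M` commutes with `B†`, it kills the entries below the diagonal. So every
block is scalar, which makes `Y` diagonal with diagonal entries unchanged when one coordinate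
is changed at a time, i.e. scalar.
-/

open Matrix Function

namespace IsLadder

section Succ
variable {n : ℕ} {B M : Matrix (Fin (n + 1)) (Fin (n + 1)) ℂ}

theorem succ_castSucc_ne_zero (hB : IsLadder B) (k : Fin n) : B k.succ k.castSucc ≠ 0 :=
  hB.2 k.castSucc (by simp)

theorem mul_apply_castSucc (hB : IsLadder B) (i : Fin (n + 1)) (k : Fin n) :
    (M * B) i k.castSucc = M i k.succ * B k.succ k.castSucc := by
  rw [mul_apply, Finset.sum_eq_single k.succ]
  · intro c _ hc
    rw [hB.1 c _ fun h => hc (Fin.ext (by simpa using h)), mul_zero]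
  · simp

theorem mul_apply_zero (hB : IsLadder B) (j : Fin (n + 1)) : (B * M) 0 j = 0 := by
  rw [mul_apply]
  exact Finset.sum_eq_zero fun c _ => by rw [hB.1 0 c (by simp), zero_mul]

theorem mul_apply_succ (hB : IsLadder B) (k : Fin n) (j : Fin (n + 1)) :
    (B * M) k.succ j = B k.succ k.castSucc * M k.castSucc j := by
  rw [mul_apply, Finset.sum_eq_single k.castSucc]
  · intro c _ hc
    rw [hB.1 _ c fun h => hc (Fin.ext (by simp at h ⊢; omega)), zero_mul]
  · simp

theorem apply_zero_succ (hB : IsLadder B) (h : Commute M B) (k : Fin n) : M 0 k.succ = 0 := by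
  have e := congr_fun₂ h.eq 0 k.castSucc
  rw [hB.mul_apply_castSucc, hB.mul_apply_zero] at e
  exact (mul_eq_zero.1 e).resolve_right (hB.succ_castSucc_ne_zero k)

theorem apply_succ_succ (hB : IsLadder B) (h : Commute M B) (a k : Fin n) :
    M a.succ k.succ * B k.succ k.castSucc = B a.succ a.castSucc * M a.castSucc k.castSucc := by
  have e := congr_fun₂ h.eq a.succ k.castSucc
  rwa [hB.mul_apply_castSucc, hB.mul_apply_succ] at e

theorem apply_eq_zero_of_lt (hB : IsLadder B) (h : Commute M B) {p q : Fin (n + 1)}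
    (hpq : p < q) : M p q = 0 := by
  induction p using Fin.induction generalizing q with
  | zero =>
    obtain ⟨k, rfl⟩ := Fin.exists_succ_eq.2 (Fin.ne_zero_of_lt hpq)
    exact hB.apply_zero_succ h k
  | succ a ih =>
    obtain ⟨k, rfl⟩ := Fin.exists_succ_eq.2 (Fin.ne_zero_of_lt hpq)
    have e := hB.apply_succ_succ h a k
    rw [ih (Fin.castSucc_lt_castSucc_iff.2 (Fin.succ_lt_succ_iff.1 hpq)), mul_zero] at e
    exact (mul_eq_zero.1 e).resolve_right (hB.succ_castSucc_ne_zero k)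

theorem apply_succ_succ_self (hB : IsLadder B) (h : Commute M B) (k : Fin n) :
    M k.succ k.succ = M k.castSucc k.castSucc :=
  mul_right_cancel₀ (hB.succ_castSucc_ne_zero k) <| by
    rw [hB.apply_succ_succ h, mul_comm]

theorem apply_self (hB : IsLadder B) (h : Commute M B) (i : Fin (n + 1)) : M i i = M 0 0 := by
  induction i using Fin.induction with
  | zero => rfl
  | succ k ih => rw [hB.apply_succ_succ_self h, ih]

theorem eq_apply_zero_zero_smul_one (hB : IsLadder B) (h : Commute M B) (h' : Commute M Bᴴ) :
    M = M 0 0 • 1 := by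
  have h'' : Commute Mᴴ B := by simpa [star_eq_conjTranspose] using h'.star_star
  ext i j
  rcases lt_trichotomy i j with hij | rfl | hij
  · simp [hB.apply_eq_zero_of_lt h hij, one_apply_ne hij.ne]
  · simp [hB.apply_self h]
  · simpa [one_apply_ne hij.ne'] using congr_arg star (hB.apply_eq_zero_of_lt h'' hij)

end Succ

theorem exists_eq_smul_one_of_commute {d : ℕ} {B M : Matrix (Fin d) (Fin d) ℂ} (hB : IsLadder B)
    (h : Commute M B) (h' : Commute M Bᴴ) : ∃ c : ℂ, M = c • 1 := by
  cases d with
  | zero => exact ⟨0, Subsingleton.elim _ _⟩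
  | succ n => exact ⟨_, hB.eq_apply_zero_zero_smul_one h h'⟩

end IsLadder

theorem Function.apply_eq_apply_of_forall_update {ι α : Type*} [Fintype ι] [DecidableEq ι]
    {κ : ι → Type*} {f : (∀ i, κ i) → α} (hf : ∀ x j a, f (update x j a) = f x) (x y : ∀ i, κ i) :
    f x = f y := by
  suffices ∀ s : Finset ι, f (s.piecewise y x) = f x by simpa using (this Finset.univ).symm
  intro s
  induction s using Finset.induction_on with
  | empty => simp
  | insert j s _ ih => rw [Finset.piecewise_insert, hf, ih]

theorem Commute.conj_of_mul_eq_one {M : Type*} [Monoid M] {u v x y : M} (hvu : v * u = 1)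
    (h : Commute x y) : Commute (u * x * v) (u * y * v) := by
  have key : ∀ a b : M, u * a * v * (u * b * v) = u * (a * b) * v := fun a b => by
    simp only [mul_assoc, ← mul_assoc v u, hvu, one_mul]
  rw [Commute, SemiconjBy, key, key, h.eq]

theorem Function.exists_ne_of_notMem_range_update {ι : Type*} [DecidableEq ι] {κ : ι → Type*}
    {j : ι} {x z : ∀ i, κ i} (hz : z ∉ Set.range (update x j)) : ∃ i ≠ j, z i ≠ x i := by
  by_contra! h
  exact hz ⟨z j, update_eq_iff.2 ⟨rfl, fun i hi => (h i hi).symm⟩⟩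

namespace Matrix

variable {ι : Type*} [DecidableEq ι] {κ : ι → Type*} {R : Type*}

/-- `1 ⊗ ⋯ ⊗ C ⊗ ⋯ ⊗ 1`, with `C` in the `j`-th tensor factor, indexed by multi-indices. -/
def onFactor [Fintype ι] [∀ i, DecidableEq (κ i)] [CommSemiring R] (j : ι)
    (C : Matrix (κ j) (κ j) R) : Matrix (∀ i, κ i) (∀ i, κ i) R :=
  of fun x y => C (x j) (y j) * ∏ i ∈ Finset.univ.erase j, if x i = y i then 1 else 0

/-- The block of `Y` whose rows and columns agree with `x` and `y`, respectively, off the `j`-th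
coordinate. -/
def slice (Y : Matrix (∀ i, κ i) (∀ i, κ i) R) (j : ι) (x y : ∀ i, κ i) : Matrix (κ j) (κ j) R :=
  of fun a b => Y (update x j a) (update y j b)

section onFactor
variable [Fintype ι] [∀ i, DecidableEq (κ i)] [CommSemiring R] {j : ι} {C : Matrix (κ j) (κ j) R}

theorem onFactor_update_update (x : ∀ i, κ i) (a b : κ j) :
    onFactor j C (update x j a) (update x j b) = C a b := by
  rw [onFactor, of_apply, update_self, update_self, Finset.prod_eq_one, mul_one]
  intro i hi
  simp [update_of_ne (Finset.ne_of_mem_erase hi)]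

theorem onFactor_apply_eq_zero {x y : ∀ i, κ i} (h : ∃ i ≠ j, x i ≠ y i) :
    onFactor j C x y = 0 := by
  obtain ⟨i, hij, hi⟩ := h
  rw [onFactor, of_apply, Finset.prod_eq_zero (Finset.mem_erase.2 ⟨hij, Finset.mem_univ i⟩)
    (if_neg hi), mul_zero]

theorem conjTranspose_onFactor [StarRing R] (C : Matrix (κ j) (κ j) R) :
    (onFactor j C)ᴴ = onFactor j Cᴴ := by
  ext x y
  simp [onFactor, star_prod, apply_ite star, eq_comm]

variable [∀ i, Fintype (κ i)]

theorem slice_mul_onFactor (Y : Matrix (∀ i, κ i) (∀ i, κ i) R) (x y : ∀ i, κ i) :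
    (Y * onFactor j C).slice j x y = Y.slice j x y * C := by
  ext a b
  simp only [slice, of_apply, mul_apply]
  refine (Fintype.sum_of_injective _ (update_injective y j) _ _ (fun z hz => ?_)
    fun c => by rw [onFactor_update_update]).symm
  obtain ⟨i, hij, hi⟩ := exists_ne_of_notMem_range_update hz
  rw [onFactor_apply_eq_zero ⟨i, hij, by rwa [update_of_ne hij]⟩, mul_zero]

theorem onFactor_mul_slice (Y : Matrix (∀ i, κ i) (∀ i, κ i) R) (x y : ∀ i, κ i) :
    (onFactor j C * Y).slice j x y = C * Y.slice j x y := by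
  ext a b
  simp only [slice, of_apply, mul_apply]
  refine (Fintype.sum_of_injective _ (update_injective x j) _ _ (fun z hz => ?_)
    fun c => by rw [onFactor_update_update]).symm
  obtain ⟨i, hij, hi⟩ := exists_ne_of_notMem_range_update hz
  rw [onFactor_apply_eq_zero ⟨i, hij, by rw [update_of_ne hij]; exact Ne.symm hi⟩, zero_mul]

theorem _root_.Commute.slice_onFactor {Y : Matrix (∀ i, κ i) (∀ i, κ i) R}
    (h : Commute Y (onFactor j C)) (x y : ∀ i, κ i) : Commute (Y.slice j x y) C := by
  rw [Commute, SemiconjBy, ← slice_mul_onFactor, h.eq, onFactor_mul_slice]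

end onFactor

theorem exists_eq_smul_one_of_forall_slice [Fintype ι] [∀ i, DecidableEq (κ i)] [Semiring R]
    (Y : Matrix (∀ i, κ i) (∀ i, κ i) R) (h : ∀ j x y, ∃ c : R, Y.slice j x y = c • 1) :
    ∃ c : R, Y = c • 1 := by
  rcases isEmpty_or_nonempty (∀ i, κ i) with _ | hne
  · exact ⟨0, Subsingleton.elim _ _⟩
  obtain ⟨x₀⟩ := hne
  have hoff : ∀ x y, x ≠ y → Y x y = 0 := fun x y hxy => by
    obtain ⟨j, hj⟩ := Function.ne_iff.1 hxy
    obtain ⟨c, hc⟩ := h j x y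
    simpa [slice, one_apply_ne hj] using congr_fun₂ hc (x j) (y j)
  have hdiag : ∀ x j a, Y (update x j a) (update x j a) = Y x x := fun x j a => by
    obtain ⟨c, hc⟩ := h j x x
    have ha := congr_fun₂ hc a a
    have hx := congr_fun₂ hc (x j) (x j)
    simp only [slice, of_apply, update_eq_self, smul_apply, one_apply_eq] at ha hx
    rw [ha, hx]
  refine ⟨Y x₀ x₀, ext fun x y => ?_⟩
  rcases eq_or_ne x y with rfl | hxy
  · simp [apply_eq_apply_of_forall_update (f := fun x => Y x x) hdiag x x₀]
  · simp [hoff x y hxy, one_apply_ne hxy]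

end Matrix

theorem corollary_two_commutant_trivial_general {N : ℕ}
    (d : Fin N → ℕ)
    {I : Type*}
    (B : I → Matrix ((i : Fin N) → Fin (d i)) ((i : Fin N) → Fin (d i)) ℂ)
    (Bbar : ∀ j : Fin N, Matrix (Fin (d j)) (Fin (d j)) ℂ)
    (hBbar : ∀ j, IsLadder (Bbar j))
    (Bbig : ∀ _ : Fin N,
      Matrix ((i : Fin N) → Fin (d i)) ((i : Fin N) → Fin (d i)) ℂ)
    (hBbig : ∀ (j : Fin N) (x y : (i : Fin N) → Fin (d i)),
      Bbig j x y = Bbar j (x j) (y j) *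
        ∏ i ∈ Finset.univ.erase j, (if x i = y i then (1 : ℂ) else 0))
    (U : Matrix ((i : Fin N) → Fin (d i)) ((i : Fin N) → Fin (d i)) ℂ)
    (hU : U * Uᴴ = 1 ∧ Uᴴ * U = 1)
    (ι : Fin N → I)
    (hι : ∀ j : Fin N,
      U * B (ι j) * Uᴴ = Bbig j ∨ U * B (ι j) * Uᴴ = (Bbig j)ᴴ)
    (X : Matrix ((i : Fin N) → Fin (d i)) ((i : Fin N) → Fin (d i)) ℂ)
    (hXB : ∀ i, X * B i = B i * X)
    (hXBd : ∀ i, X * (B i)ᴴ = (B i)ᴴ * X) :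
    ∃ c : ℂ,
      X = c • (1 : Matrix ((i : Fin N) → Fin (d i)) ((i : Fin N) → Fin (d i)) ℂ) := by
  have hconj : ∀ A, Commute X A → Commute (U * X * Uᴴ) (U * A * Uᴴ) :=
    fun A h => h.conj_of_mul_eq_one hU.2
  have hlocal : ∀ j, Commute (U * X * Uᴴ) (onFactor j (Bbar j)) ∧
      Commute (U * X * Uᴴ) (onFactor j (Bbar j)ᴴ) := by
    intro j
    have hBj : Bbig j = onFactor j (Bbar j) := by ext x y; rw [hBbig]; rfl
    have h₁ := hconj _ (hXB (ι j))
    have h₂ : Commute (U * X * Uᴴ) (U * B (ι j) * Uᴴ)ᴴ := by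
      simpa [conjTranspose_mul, mul_assoc] using hconj _ (hXBd (ι j))
    rw [← conjTranspose_onFactor, ← hBj]
    rcases hι j with h | h <;> rw [h] at h₁ h₂
    exacts [⟨h₁, h₂⟩, ⟨by simpa using h₂, h₁⟩]
  obtain ⟨c, hc⟩ := exists_eq_smul_one_of_forall_slice (U * X * Uᴴ) fun j x y =>
    (hBbar j).exists_eq_smul_one_of_commute ((hlocal j).1.slice_onFactor x y)
      ((hlocal j).2.slice_onFactor x y)
  refine ⟨c, ?_⟩
  calc X = Uᴴ * (U * X * Uᴴ) * U := by
        simp only [← mul_assoc, hU.2, one_mul]; rw [mul_assoc, hU.2, mul_one]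
    _ = c • 1 := by rw [hc, Matrix.mul_smul, mul_one, Matrix.smul_mul, hU.2]

/-- Commutant-triviality content of Corollary 2: on a tensor product
`ℂ^{d₁} ⊗ ⋯ ⊗ ℂ^{d_N}` (matrices indexed by multi-indices), if `N` of the Lindblad
operators `B_{i₁}, …, B_{i_N}` are carried by a single unitary `U` onto the operators
`B̄⁽ᴺ⁾_j` or their conjugate transposes — where `B̄⁽ᴺ⁾_j` acts as a ladder matrix `B̄_j`
on the `j`-th factor and as the identity on the other factors — then the commutant
`{H, Bᵢ, Bᵢ† : i ∈ I}'` is trivial. -/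
theorem corollary_two_commutant_trivial {N : ℕ} (hN : 1 ≤ N)
    (d : Fin N → ℕ) (hd : ∀ i, 1 ≤ d i)
    {I : Type*} [Fintype I]
    (H : Matrix ((i : Fin N) → Fin (d i)) ((i : Fin N) → Fin (d i)) ℂ)
    (hH : H.IsHermitian)
    (B : I → Matrix ((i : Fin N) → Fin (d i)) ((i : Fin N) → Fin (d i)) ℂ)
    (Bbar : ∀ j : Fin N, Matrix (Fin (d j)) (Fin (d j)) ℂ)
    (hBbar : ∀ j, IsLadder (Bbar j))
    (Bbig : ∀ _ : Fin N,
      Matrix ((i : Fin N) → Fin (d i)) ((i : Fin N) → Fin (d i)) ℂ)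
    (hBbig : ∀ (j : Fin N) (x y : (i : Fin N) → Fin (d i)),
      Bbig j x y = Bbar j (x j) (y j) *
        ∏ i ∈ Finset.univ.erase j, (if x i = y i then (1 : ℂ) else 0))
    (U : Matrix ((i : Fin N) → Fin (d i)) ((i : Fin N) → Fin (d i)) ℂ)
    (hU : U * Uᴴ = 1 ∧ Uᴴ * U = 1)
    (ι : Fin N → I)
    (hι : ∀ j : Fin N,
      U * B (ι j) * Uᴴ = Bbig j ∨ U * B (ι j) * Uᴴ = (Bbig j)ᴴ)
    (X : Matrix ((i : Fin N) → Fin (d i)) ((i : Fin N) → Fin (d i)) ℂ)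
    (hXH : X * H = H * X)
    (hXB : ∀ i, X * B i = B i * X)
    (hXBd : ∀ i, X * (B i)ᴴ = (B i)ᴴ * X) :
    ∃ c : ℂ,
      X = c • (1 : Matrix ((i : Fin N) → Fin (d i)) ((i : Fin N) → Fin (d i)) ℂ) :=
  corollary_two_commutant_trivial_general d B Bbar hBbar Bbig hBbig U hU ι hι X hXB hXBd
end
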